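/- arXiv:2505.05813 — 7 statements merged into one kernel-verified Lean document; each statement's English description precedes it below -/
import Mathlib

section
/- Any critical point (W, H, b) of the regularized BCE objective f_bce — that is, any point of ℝ^{K×d} × ℝ^{d×N} × ℝ^K at which the derivative of f_bce vanishes — satisfies Wᵀ W = (λ_H/λ_W) · H Hᵀ and ‖W‖_F² = (λ_H/λ_W) · ‖H‖_F². -/
open scoped BigOperators RealInnerProductSpace

/-- Per-sample binary cross-entropy (BCE) loss of a feature `x` with label `k`,
for classifier vectors `w` and biases `b`. -/
noncomputable def Lbce {d K : ℕ} (w : Fin K → EuclideanSpace ℝ (Fin d))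
    (b : Fin K → ℝ) (k : Fin K) (x : EuclideanSpace ℝ (Fin d)) : ℝ :=
  Real.log (1 + Real.exp (-⟪w k, x⟫ + b k)) +
    ∑ j ∈ Finset.univ.erase k, Real.log (1 + Real.exp (⟪w j, x⟫ - b j))

/-- The regularized BCE objective `f_bce(W, H, b)`. -/
noncomputable def fbce {d K n : ℕ} (lamW lamH lamb : ℝ)
    (w : Fin K → EuclideanSpace ℝ (Fin d))
    (h : Fin K → Fin n → EuclideanSpace ℝ (Fin d))
    (b : Fin K → ℝ) : ℝ :=
  (1 / ((n : ℝ) * (K : ℝ))) * ∑ k, ∑ i, Lbce w b k (h k i)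
    + (lamW / 2) * ∑ k, ‖w k‖ ^ 2
    + (lamH / 2) * ∑ k, ∑ i, ‖h k i‖ ^ 2
    + (lamb / 2) * ∑ k, b k ^ 2

/-- The regularized BCE objective as a function on the product space
`ℝ^{K×d} × ℝ^{d×N} × ℝ^K`, for use with `fderiv`. -/
noncomputable def fbceFull (d K n : ℕ) (lamW lamH lamb : ℝ) :
    ((Fin K → EuclideanSpace ℝ (Fin d)) ×
      (Fin K → Fin n → EuclideanSpace ℝ (Fin d)) × (Fin K → ℝ)) → ℝ :=
  fun p => fbce lamW lamH lamb p.1 p.2.1 p.2.2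

/-! ### Auxiliary definitions and lemmas -/

/-- The logistic sigmoid. -/
noncomputable def sig (u : ℝ) : ℝ := Real.exp u / (1 + Real.exp u)

/-- The coefficient `s_{j,(k,i)} = ∂ L_bce(h_i^{(k)}, k) / ∂⟪w_j, h_i^{(k)}⟫`. -/
noncomputable def sVal {d K n : ℕ} (w : Fin K → EuclideanSpace ℝ (Fin d))
    (h : Fin K → Fin n → EuclideanSpace ℝ (Fin d)) (b : Fin K → ℝ)
    (j k : Fin K) (i : Fin n) : ℝ :=
  if j = k then -(sig (b k - ⟪w k, h k i⟫)) else sig (⟪w j, h k i⟫ - b j)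

lemma hasDerivAt_log_one_add_exp (c m : ℝ) :
    HasDerivAt (fun t : ℝ => Real.log (1 + Real.exp (c + t * m))) (m * sig c) 0 := by
  have h1 : HasDerivAt (fun t : ℝ => c + t * m) m 0 := by
    simpa using ((hasDerivAt_id (0:ℝ)).mul_const m).const_add c
  have h3 := ((h1.exp).const_add 1).log (by positivity)
  simpa [sig, mul_comm, div_eq_mul_inv, mul_assoc, mul_left_comm] using h3

lemma hasDerivAt_Lbce_line {K : ℕ} (c m b : Fin K → ℝ) (k : Fin K) :
    HasDerivAt (fun t : ℝ =>
      Real.log (1 + Real.exp (-(c k + t * m k) + b k)) +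
        ∑ j ∈ Finset.univ.erase k, Real.log (1 + Real.exp ((c j + t * m j) - b j)))
      (∑ j, m j * (if j = k then -(sig (b k - c k)) else sig (c j - b j))) 0 := by
  have h1 : HasDerivAt (fun t : ℝ => Real.log (1 + Real.exp (-(c k + t * m k) + b k)))
      (-(m k) * sig (b k - c k)) 0 := by
    have he : (fun t : ℝ => Real.log (1 + Real.exp (-(c k + t * m k) + b k)))
        = fun t => Real.log (1 + Real.exp ((b k - c k) + t * (-(m k)))) := by
      funext t; ring_nf
    rw [he]; exact hasDerivAt_log_one_add_exp (b k - c k) (-(m k))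
  have h2 : HasDerivAt (fun t : ℝ =>
      ∑ j ∈ Finset.univ.erase k, Real.log (1 + Real.exp ((c j + t * m j) - b j)))
      (∑ j ∈ Finset.univ.erase k, m j * sig (c j - b j)) 0 := by
    apply HasDerivAt.fun_sum; intro j _
    have he : (fun t : ℝ => Real.log (1 + Real.exp ((c j + t * m j) - b j)))
        = fun t => Real.log (1 + Real.exp ((c j - b j) + t * m j)) := by
      funext t; ring_nf
    rw [he]; exact hasDerivAt_log_one_add_exp _ _
  have := h1.fun_add h2
  refine this.congr_deriv (Eq.symm ?_)
  rw [← Finset.sum_erase_add _ _ (Finset.mem_univ k), if_pos rfl,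
    Finset.sum_congr rfl (fun j hj => by rw [if_neg (Finset.ne_of_mem_erase hj)])]
  ring

lemma hasDerivAt_norm_line {d : ℕ} (y v : EuclideanSpace ℝ (Fin d)) :
    HasDerivAt (fun t : ℝ => ‖y + t • v‖ ^ 2) (2 * ⟪v, y⟫) 0 := by
  have hfun : (fun t : ℝ => ‖y + t • v‖ ^ 2)
      = fun t : ℝ => ‖y‖^2 + t * (2 * ⟪v, y⟫) + t^2 * ‖v‖^2 := by
    funext t
    rw [@norm_add_sq_real]
    simp only [real_inner_smul_right, norm_smul, mul_pow, real_inner_comm y v,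
      Real.norm_eq_abs, sq_abs]
    ring
  rw [hfun]
  have ha : HasDerivAt (fun t : ℝ => ‖y‖^2 + t * (2*⟪v,y⟫)) (2*⟪v,y⟫) 0 := by
    simpa using ((hasDerivAt_id (0:ℝ)).mul_const (2*⟪v,y⟫)).const_add (‖y‖^2)
  have hb : HasDerivAt (fun t : ℝ => t^2 * ‖v‖^2) 0 0 := by
    simpa using ((hasDerivAt_pow 2 (0:ℝ)).mul_const (‖v‖^2))
  simpa using ha.fun_add hb

lemma fbceFull_differentiableAt (d K n : ℕ) (lamW lamH lamb : ℝ)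
    (q : (Fin K → EuclideanSpace ℝ (Fin d)) ×
      (Fin K → Fin n → EuclideanSpace ℝ (Fin d)) × (Fin K → ℝ)) :
    DifferentiableAt ℝ (fbceFull d K n lamW lamH lamb) q := by
  have hw : ∀ j, DifferentiableAt ℝ
      (fun p : (Fin K → EuclideanSpace ℝ (Fin d)) ×
        (Fin K → Fin n → EuclideanSpace ℝ (Fin d)) × (Fin K → ℝ) => p.1 j) q := by
    intro j; fun_prop
  have hx : ∀ k i, DifferentiableAt ℝ
      (fun p : (Fin K → EuclideanSpace ℝ (Fin d)) ×
        (Fin K → Fin n → EuclideanSpace ℝ (Fin d)) × (Fin K → ℝ) => p.2.1 k i) q := by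
    intro k i; fun_prop
  have hb : ∀ j, DifferentiableAt ℝ
      (fun p : (Fin K → EuclideanSpace ℝ (Fin d)) ×
        (Fin K → Fin n → EuclideanSpace ℝ (Fin d)) × (Fin K → ℝ) => p.2.2 j) q := by
    intro j; fun_prop
  unfold fbceFull fbce Lbce
  apply DifferentiableAt.add
  apply DifferentiableAt.add
  apply DifferentiableAt.add
  · exact DifferentiableAt.const_mul (DifferentiableAt.fun_sum (fun k _ =>
      DifferentiableAt.fun_sum (fun i _ =>
        DifferentiableAt.fun_add
          (((((hw k).inner ℝ (hx k i)).fun_neg.fun_add (hb k)).exp.const_add 1).log (by positivity))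
          (DifferentiableAt.fun_sum (fun j _ =>
            (((((hw j).inner ℝ (hx k i)).fun_sub (hb j)).exp.const_add 1).log (by positivity))))))) _
  · have hd : ∀ k : Fin K, DifferentiableAt ℝ
        (fun p : (Fin K → EuclideanSpace ℝ (Fin d)) ×
        (Fin K → Fin n → EuclideanSpace ℝ (Fin d)) × (Fin K → ℝ) => ‖p.1 k‖ ^ 2) q := by
      intro k
      have h2 : (fun p : (Fin K → EuclideanSpace ℝ (Fin d)) ×
        (Fin K → Fin n → EuclideanSpace ℝ (Fin d)) × (Fin K → ℝ) => ‖p.1 k‖ ^ 2)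
          = fun p => ⟪p.1 k, p.1 k⟫ := by
        funext p; rw [real_inner_self_eq_norm_sq]
      rw [h2]; exact (hw k).inner ℝ (hw k)
    exact DifferentiableAt.const_mul (DifferentiableAt.fun_sum (fun k _ => hd k)) _
  · have hd : ∀ (k : Fin K) (i : Fin n), DifferentiableAt ℝ
        (fun p : (Fin K → EuclideanSpace ℝ (Fin d)) ×
        (Fin K → Fin n → EuclideanSpace ℝ (Fin d)) × (Fin K → ℝ) => ‖p.2.1 k i‖ ^ 2) q := by
      intro k i
      have h2 : (fun p : (Fin K → EuclideanSpace ℝ (Fin d)) ×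
        (Fin K → Fin n → EuclideanSpace ℝ (Fin d)) × (Fin K → ℝ) => ‖p.2.1 k i‖ ^ 2)
          = fun p => ⟪p.2.1 k i, p.2.1 k i⟫ := by
        funext p; rw [real_inner_self_eq_norm_sq]
      rw [h2]; exact (hx k i).inner ℝ (hx k i)
    exact DifferentiableAt.const_mul (DifferentiableAt.fun_sum (fun k _ =>
      DifferentiableAt.fun_sum (fun i _ => hd k i))) _
  · exact DifferentiableAt.const_mul (DifferentiableAt.fun_sum (fun k _ => (hb k).fun_pow 2)) _

set_option maxHeartbeats 2000000 in
/-- Any critical point of the regularized BCE objective satisfies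
`WᵀW = (λ_H/λ_W) · H Hᵀ` and `‖W‖_F² = (λ_H/λ_W) · ‖H‖_F²`. -/
theorem bce_critical_point_balance {d K n : ℕ} (hK : 2 ≤ K) (hn : 1 ≤ n)
    (lamW lamH lamb : ℝ) (hlamW : 0 < lamW) (hlamH : 0 < lamH) (hlamb : 0 ≤ lamb)
    (w : Fin K → EuclideanSpace ℝ (Fin d))
    (h : Fin K → Fin n → EuclideanSpace ℝ (Fin d))
    (b : Fin K → ℝ)
    (hcrit : fderiv ℝ (fbceFull d K n lamW lamH lamb) (w, h, b) = 0) :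
    (∀ a c : Fin d, ∑ k, w k a * w k c =
      (lamH / lamW) * ∑ k, ∑ i, h k i a * h k i c) ∧
    (∑ k, ‖w k‖ ^ 2 = (lamH / lamW) * ∑ k, ∑ i, ‖h k i‖ ^ 2) := by
  -- derivative along any line through the critical point vanishes
  have hzero : ∀ v : (Fin K → EuclideanSpace ℝ (Fin d)) ×
      (Fin K → Fin n → EuclideanSpace ℝ (Fin d)) × (Fin K → ℝ),
      HasDerivAt (fun t : ℝ => fbceFull d K n lamW lamH lamb ((w, h, b) + t • v)) 0 0 := by
    intro v
    have hline : HasDerivAt (fun t : ℝ => (w, h, b) + t • v) v 0 := by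
      simpa using ((hasDerivAt_id (0:ℝ)).smul_const v).const_add (w, h, b)
    have hf : HasFDerivAt (fbceFull d K n lamW lamH lamb)
        (0 : _ →L[ℝ] ℝ) ((w, h, b) + (0:ℝ) • v) := by
      have := (fbceFull_differentiableAt d K n lamW lamH lamb (w, h, b)).hasFDerivAt
      rw [hcrit] at this
      simpa using this
    exact hf.comp_hasDerivAt 0 hline
  have hN : (0:ℝ) < (n:ℝ) * K := by positivity
  -- gradient equation in a W direction
  have keyW : ∀ (j : Fin K) (a : Fin d),
      lamW * w j a + (1 / ((n:ℝ) * K)) * ∑ k, ∑ i, sVal w h b j k i * h k i a = 0 := by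
    intro j a
    set u : EuclideanSpace ℝ (Fin d) := EuclideanSpace.single a (1:ℝ) with hu
    set P : Fin K → EuclideanSpace ℝ (Fin d) := Pi.single j u with hP
    have hG : HasDerivAt (fun t : ℝ => fbceFull d K n lamW lamH lamb
        ((w, h, b) + t • ((P, 0, 0) :
          (Fin K → EuclideanSpace ℝ (Fin d)) ×
            (Fin K → Fin n → EuclideanSpace ℝ (Fin d)) × (Fin K → ℝ))))
        (1 / ((n:ℝ) * K) * ∑ k, ∑ i, ∑ j', ⟪P j', h k i⟫ * sVal w h b j' k i
          + lamW / 2 * ∑ k, 2 * ⟪P k, w k⟫) 0 := by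
      simp only [fbceFull, fbce, Lbce, Prod.fst_add, Prod.snd_add, Prod.smul_fst, Prod.smul_snd,
        Prod.mk_add_mk, Prod.smul_mk, smul_zero, add_zero, Pi.add_apply, Pi.smul_apply,
        inner_add_left, real_inner_smul_left]
      have h1 : HasDerivAt (fun t : ℝ => ∑ k : Fin K, ∑ i : Fin n,
          (Real.log (1 + Real.exp (-(⟪w k, h k i⟫ + t * ⟪P k, h k i⟫) + b k)) +
            ∑ j' ∈ Finset.univ.erase k,
              Real.log (1 + Real.exp (⟪w j', h k i⟫ + t * ⟪P j', h k i⟫ - b j'))))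
          (∑ k, ∑ i, ∑ j', ⟪P j', h k i⟫ * sVal w h b j' k i) 0 := by
        apply HasDerivAt.fun_sum; intro k _
        apply HasDerivAt.fun_sum; intro i _
        exact hasDerivAt_Lbce_line (fun j' => ⟪w j', h k i⟫) (fun j' => ⟪P j', h k i⟫) b k
      have h2 : HasDerivAt (fun t : ℝ => ∑ k : Fin K, ‖w k + t • P k‖ ^ 2)
          (∑ k, 2 * ⟪P k, w k⟫) 0 :=
        HasDerivAt.fun_sum (fun k _ => hasDerivAt_norm_line (w k) (P k))
      have := ((h1.const_mul (1 / ((n:ℝ) * K))).fun_add (h2.const_mul (lamW / 2))).fun_add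
        (hasDerivAt_const (0:ℝ) (lamH / 2 * ∑ k, ∑ i, ‖h k i‖ ^ 2)) |>.fun_add
        (hasDerivAt_const (0:ℝ) (lamb / 2 * ∑ k, b k ^ 2))
      simpa using this
    have hDzero := hG.unique (hzero _)
    -- simplify the inner sums
    have hinnerP : ∀ (j' : Fin K) (x : EuclideanSpace ℝ (Fin d)),
        ⟪P j', x⟫ = if j' = j then x a else 0 := by
      intro j' x
      by_cases hjj : j' = j
      · subst hjj
        simp [hP, hu, EuclideanSpace.inner_single_left]
      · simp [hP, Pi.single_eq_of_ne hjj, hjj]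
    have hsum1 : ∀ (k : Fin K) (i : Fin n),
        (∑ j', ⟪P j', h k i⟫ * sVal w h b j' k i) = h k i a * sVal w h b j k i := by
      intro k i
      rw [Finset.sum_eq_single j]
      · rw [hinnerP, if_pos rfl]
      · intro j' _ hne; rw [hinnerP, if_neg hne, zero_mul]
      · intro hj; exact absurd (Finset.mem_univ j) hj
    have hsum2 : (∑ k, 2 * ⟪P k, w k⟫) = 2 * w j a := by
      rw [Finset.sum_eq_single j]
      · rw [hinnerP, if_pos rfl]
      · intro j' _ hne; rw [hinnerP, if_neg hne, mul_zero]
      · intro hj; exact absurd (Finset.mem_univ j) hj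
    rw [Finset.sum_congr rfl (fun k _ => Finset.sum_congr rfl (fun i _ => hsum1 k i)),
      hsum2] at hDzero
    have : (1 / ((n:ℝ) * K)) * ∑ k, ∑ i, sVal w h b j k i * h k i a
        = (1 / ((n:ℝ) * K)) * ∑ k, ∑ i, h k i a * sVal w h b j k i := by
      congr 1; exact Finset.sum_congr rfl (fun k _ => Finset.sum_congr rfl
        (fun i _ => by ring))
    rw [this]
    linarith [hDzero]
  -- gradient equation in an H direction
  have keyH : ∀ (k0 : Fin K) (i0 : Fin n) (a : Fin d),
      lamH * h k0 i0 a + (1 / ((n:ℝ) * K)) * ∑ j, sVal w h b j k0 i0 * w j a = 0 := by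
    intro k0 i0 a
    set u : EuclideanSpace ℝ (Fin d) := EuclideanSpace.single a (1:ℝ) with hu
    set Q : Fin K → Fin n → EuclideanSpace ℝ (Fin d) := Pi.single k0 (Pi.single i0 u) with hQ
    have hQval : ∀ (k : Fin K) (i : Fin n) (x : EuclideanSpace ℝ (Fin d)),
        ⟪x, Q k i⟫ = if k = k0 ∧ i = i0 then x a else 0 := by
      intro k i x
      by_cases hk : k = k0
      · subst hk
        by_cases hi : i = i0
        · subst hi
          simp [hQ, hu, EuclideanSpace.inner_single_right]
        · simp [hQ, Pi.single_eq_of_ne hi, hi]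
      · simp [hQ, Pi.single_eq_of_ne hk, hk]
    have hG : HasDerivAt (fun t : ℝ => fbceFull d K n lamW lamH lamb
        ((w, h, b) + t • ((0, Q, 0) :
          (Fin K → EuclideanSpace ℝ (Fin d)) ×
            (Fin K → Fin n → EuclideanSpace ℝ (Fin d)) × (Fin K → ℝ))))
        (1 / ((n:ℝ) * K) * ∑ k, ∑ i, ∑ j', ⟪w j', Q k i⟫ * sVal w h b j' k i
          + lamH / 2 * ∑ k, ∑ i, 2 * ⟪Q k i, h k i⟫) 0 := by
      simp only [fbceFull, fbce, Lbce, Prod.fst_add, Prod.snd_add, Prod.smul_fst, Prod.smul_snd,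
        Prod.mk_add_mk, Prod.smul_mk, smul_zero, add_zero, Pi.add_apply, Pi.smul_apply,
        inner_add_right, real_inner_smul_right]
      have h1 : HasDerivAt (fun t : ℝ => ∑ k : Fin K, ∑ i : Fin n,
          (Real.log (1 + Real.exp (-(⟪w k, h k i⟫ + t * ⟪w k, Q k i⟫) + b k)) +
            ∑ j' ∈ Finset.univ.erase k,
              Real.log (1 + Real.exp (⟪w j', h k i⟫ + t * ⟪w j', Q k i⟫ - b j'))))
          (∑ k, ∑ i, ∑ j', ⟪w j', Q k i⟫ * sVal w h b j' k i) 0 := by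
        apply HasDerivAt.fun_sum; intro k _
        apply HasDerivAt.fun_sum; intro i _
        exact hasDerivAt_Lbce_line (fun j' => ⟪w j', h k i⟫) (fun j' => ⟪w j', Q k i⟫) b k
      have h2 : HasDerivAt (fun t : ℝ => ∑ k : Fin K, ∑ i : Fin n, ‖h k i + t • Q k i‖ ^ 2)
          (∑ k, ∑ i, 2 * ⟪Q k i, h k i⟫) 0 :=
        HasDerivAt.fun_sum (fun k _ => HasDerivAt.fun_sum (fun i _ => hasDerivAt_norm_line (h k i) (Q k i)))
      have := (((h1.const_mul (1 / ((n:ℝ) * K))).fun_add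
        (hasDerivAt_const (0:ℝ) (lamW / 2 * ∑ k, ‖w k‖ ^ 2))).fun_add
        (h2.const_mul (lamH / 2))).fun_add
        (hasDerivAt_const (0:ℝ) (lamb / 2 * ∑ k, b k ^ 2))
      simpa using this
    have hDzero := hG.unique (hzero _)
    have hsum1 : (∑ k, ∑ i, ∑ j', ⟪w j', Q k i⟫ * sVal w h b j' k i)
        = ∑ j', w j' a * sVal w h b j' k0 i0 := by
      rw [Finset.sum_eq_single k0]
      · rw [Finset.sum_eq_single i0]
        · exact Finset.sum_congr rfl (fun j' _ => by rw [hQval, if_pos ⟨rfl, rfl⟩])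
        · intro i _ hne
          exact Finset.sum_eq_zero (fun j' _ => by
            rw [hQval, if_neg (fun hc => hne hc.2), zero_mul])
        · intro hk; exact absurd (Finset.mem_univ i0) hk
      · intro k _ hne
        exact Finset.sum_eq_zero (fun i _ => Finset.sum_eq_zero (fun j' _ => by
          rw [hQval, if_neg (fun hc => hne hc.1), zero_mul]))
      · intro hk; exact absurd (Finset.mem_univ k0) hk
    have hsum2 : (∑ k, ∑ i, 2 * ⟪Q k i, h k i⟫) = 2 * h k0 i0 a := by
      have hQval' : ∀ (k : Fin K) (i : Fin n),
          ⟪Q k i, h k i⟫ = if k = k0 ∧ i = i0 then h k i a else 0 := by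
        intro k i; rw [real_inner_comm, hQval]
      rw [Finset.sum_eq_single k0]
      · rw [Finset.sum_eq_single i0]
        · rw [hQval', if_pos ⟨rfl, rfl⟩]
        · intro i _ hne; rw [hQval', if_neg (fun hc => hne hc.2), mul_zero]
        · intro hk; exact absurd (Finset.mem_univ i0) hk
      · intro k _ hne
        exact Finset.sum_eq_zero (fun i _ => by
          rw [hQval', if_neg (fun hc => hne hc.1), mul_zero])
      · intro hk; exact absurd (Finset.mem_univ k0) hk
    rw [hsum1, hsum2] at hDzero
    have : (1 / ((n:ℝ) * K)) * ∑ j, sVal w h b j k0 i0 * w j a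
        = (1 / ((n:ℝ) * K)) * ∑ j', w j' a * sVal w h b j' k0 i0 := by
      congr 1; exact Finset.sum_congr rfl (fun j _ => by ring)
    rw [this]
    linarith [hDzero]
  -- the balance equations
  have part1 : ∀ a c : Fin d, ∑ k, w k a * w k c =
      (lamH / lamW) * ∑ k, ∑ i, h k i a * h k i c := by
    intro a c
    have hW : lamW * ∑ j, w j a * w j c
        = -(1 / ((n:ℝ) * K)) * ∑ j, ∑ k, ∑ i, w j a * (sVal w h b j k i * h k i c) := by
      rw [Finset.mul_sum, Finset.mul_sum]
      refine Finset.sum_congr rfl (fun j _ => ?_)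
      have hj := keyW j c
      have hj' : lamW * w j c
          = -(1 / ((n:ℝ) * K)) * ∑ k, ∑ i, sVal w h b j k i * h k i c := by linarith
      calc lamW * (w j a * w j c) = w j a * (lamW * w j c) := by ring
        _ = w j a * (-(1 / ((n:ℝ) * K)) * ∑ k, ∑ i, sVal w h b j k i * h k i c) := by
            rw [hj']
        _ = -(1 / ((n:ℝ) * K)) * ∑ k, ∑ i, w j a * (sVal w h b j k i * h k i c) := by
            have hpull : (∑ k, ∑ i, w j a * (sVal w h b j k i * h k i c))
                = w j a * ∑ k, ∑ i, sVal w h b j k i * h k i c := by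
              rw [Finset.mul_sum]
              exact Finset.sum_congr rfl (fun k _ => (Finset.mul_sum _ _ _).symm)
            rw [hpull]; ring
    have hH : lamH * ∑ k, ∑ i, h k i a * h k i c
        = -(1 / ((n:ℝ) * K)) * ∑ k, ∑ i, ∑ j, w j a * (sVal w h b j k i * h k i c) := by
      rw [Finset.mul_sum, Finset.mul_sum]
      refine Finset.sum_congr rfl (fun k _ => ?_)
      rw [Finset.mul_sum, Finset.mul_sum]
      refine Finset.sum_congr rfl (fun i _ => ?_)
      have hki := keyH k i a
      have hki' : lamH * h k i a
          = -(1 / ((n:ℝ) * K)) * ∑ j, sVal w h b j k i * w j a := by linarith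
      calc lamH * (h k i a * h k i c) = (lamH * h k i a) * h k i c := by ring
        _ = (-(1 / ((n:ℝ) * K)) * ∑ j, sVal w h b j k i * w j a) * h k i c := by rw [hki']
        _ = -(1 / ((n:ℝ) * K)) * ∑ j, w j a * (sVal w h b j k i * h k i c) := by
            have hpull : (∑ j, w j a * (sVal w h b j k i * h k i c))
                = (∑ j, sVal w h b j k i * w j a) * h k i c := by
              rw [Finset.sum_mul]
              exact Finset.sum_congr rfl (fun j _ => by ring)
            rw [hpull]; ring
    have hswap : (∑ j, ∑ k, ∑ i, w j a * (sVal w h b j k i * h k i c))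
        = ∑ k, ∑ i, ∑ j, w j a * (sVal w h b j k i * h k i c) := by
      rw [Finset.sum_comm]
      exact Finset.sum_congr rfl (fun k _ => Finset.sum_comm)
    have hWH : lamW * ∑ j, w j a * w j c = lamH * ∑ k, ∑ i, h k i a * h k i c := by
      rw [hW, hH, hswap]
    rw [div_mul_eq_mul_div, eq_div_iff (ne_of_gt hlamW)]
    linarith [hWH]
  refine ⟨part1, ?_⟩
  have hnormsq : ∀ x : EuclideanSpace ℝ (Fin d), ‖x‖ ^ 2 = ∑ a, x a * x a := by
    intro x
    rw [EuclideanSpace.norm_sq_eq]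
    exact Finset.sum_congr rfl (fun i _ => by rw [Real.norm_eq_abs, sq_abs, sq])
  calc ∑ k, ‖w k‖ ^ 2 = ∑ k, ∑ a, w k a * w k a := by
        exact Finset.sum_congr rfl (fun k _ => hnormsq (w k))
    _ = ∑ a, ∑ k, w k a * w k a := Finset.sum_comm
    _ = ∑ a : Fin d, (lamH / lamW) * ∑ k, ∑ i, h k i a * h k i a := by
        exact Finset.sum_congr rfl (fun a _ => part1 a a)
    _ = (lamH / lamW) * ∑ a : Fin d, ∑ k, ∑ i, h k i a * h k i a := by
        rw [Finset.mul_sum]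
    _ = (lamH / lamW) * ∑ k, ∑ i, ‖h k i‖ ^ 2 := by
        congr 1
        rw [Finset.sum_comm]
        refine Finset.sum_congr rfl (fun k _ => ?_)
        rw [Finset.sum_comm]
        exact Finset.sum_congr rfl (fun i _ => (hnormsq (h k i)).symm)
end

section
/- Fix w_1, …, w_K ∈ ℝ^d, b ∈ ℝ^K, a label k ∈ {1,…,K}, and a feature h ∈ ℝ^d. Then for all real c_1, c_2 > 0, the per-sample BCE loss is lower bounded by L_bce(h, k) ≥ (1/(1+c_1)) · (−⟨w_k, h⟩ + b_k) + (1/(1+c_2)) · Σ_{j≠k} (⟨w_j, h⟩ − b_j) + C, where C = (c_1/(1+c_1)) · log((1+c_1)/c_1) + log(1+c_1)/(1+c_1) + ((K−1)/(1+c_2)) · [c_2 · log((1+c_2)/c_2) + log(1+c_2)]. -/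
/-!
The softplus `t ↦ log (1 + exp t)` is the convex conjugate of the negative binary entropy, so
`p * t + H(p) ≤ log (1 + exp t)` for every `p ∈ (0, 1)`; this is Jensen's inequality for `log`
at the points `exp t / p` and `1 / (1 - p)` with weights `p` and `1 - p`. Each summand of the BCE
loss is a softplus; taking `p = 1 / (1 + c₁)` for the true label and `p = 1 / (1 + c₂)` for the
other `K - 1` labels, the entropies `H(p)` add up to the constant `C`.
-/

open scoped BigOperators RealInnerProductSpace

/-- The constant `C` appearing in the BCE lower bound. -/
noncomputable def Cconst (K : ℕ) (c1 c2 : ℝ) : ℝ :=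
  c1 / (1 + c1) * Real.log ((1 + c1) / c1) + Real.log (1 + c1) / (1 + c1) +
    ((K : ℝ) - 1) / (1 + c2) *
      (c2 * Real.log ((1 + c2) / c2) + Real.log (1 + c2))

open Real Finset

theorem mul_add_binEntropy_le_log_one_add_exp {p : ℝ} (hp : p ∈ Set.Ioo 0 1) (t : ℝ) :
    p * t + binEntropy p ≤ log (1 + exp t) := by
  obtain ⟨hp0, hp1⟩ := hp
  have hq0 : 0 < 1 - p := sub_pos.2 hp1
  have jensen := strictConcaveOn_log_Ioi.concaveOn.2
    (Set.mem_Ioi.2 (div_pos (exp_pos t) hp0)) (Set.mem_Ioi.2 (inv_pos.2 hq0))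
    hp0.le hq0.le (add_sub_cancel p 1)
  simp only [smul_eq_mul, mul_div_cancel₀ _ hp0.ne', mul_inv_cancel₀ hq0.ne'] at jensen
  rw [log_div (exp_ne_zero t) hp0.ne', log_exp, add_comm (exp t)] at jensen
  rw [binEntropy, log_inv p]
  linarith

theorem binEntropy_inv_one_add {c : ℝ} (hc : 0 < c) :
    binEntropy (1 + c)⁻¹ = (c * log ((1 + c) / c) + log (1 + c)) / (1 + c) := by
  have hc1 : 1 + c ≠ 0 := by positivity
  have hq : 1 - (1 + c)⁻¹ = c / (1 + c) := by field_simp; ring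
  rw [binEntropy, inv_inv, hq, inv_div]
  field_simp
  ring

theorem inv_one_add_mem_Ioo {c : ℝ} (hc : 0 < c) : (1 + c)⁻¹ ∈ Set.Ioo 0 1 :=
  ⟨by positivity, inv_lt_one_of_one_lt₀ (by linarith)⟩

theorem Lbce_lower_bound_general {d K : ℕ}
    (w : Fin K → EuclideanSpace ℝ (Fin d)) (b : Fin K → ℝ) (k : Fin K)
    (x : EuclideanSpace ℝ (Fin d)) (c1 c2 : ℝ) (hc1 : 0 < c1) (hc2 : 0 < c2) :
    (1 / (1 + c1)) * (-⟪w k, x⟫ + b k) +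
        (1 / (1 + c2)) * ∑ j ∈ Finset.univ.erase k, (⟪w j, x⟫ - b j) +
        Cconst K c1 c2 ≤
      Lbce w b k x := by
  have card_erase : ((univ.erase k).card : ℝ) = K - 1 := by
    rw [card_erase_of_mem (mem_univ k), card_univ, Fintype.card_fin,
      Nat.cast_sub (Nat.one_le_of_lt k.pos), Nat.cast_one]
  have bound_k :=
    mul_add_binEntropy_le_log_one_add_exp (inv_one_add_mem_Ioo hc1) (-⟪w k, x⟫ + b k)
  have bound_erase := sum_le_sum fun j (_ : j ∈ univ.erase k) =>
    mul_add_binEntropy_le_log_one_add_exp (inv_one_add_mem_Ioo hc2) (⟪w j, x⟫ - b j)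
  rw [sum_add_distrib, ← mul_sum, sum_const, nsmul_eq_mul, card_erase] at bound_erase
  rw [binEntropy_inv_one_add hc1] at bound_k
  rw [binEntropy_inv_one_add hc2] at bound_erase
  unfold Lbce Cconst
  linear_combination bound_k + bound_erase

/-- **Lower bound for the per-sample BCE loss.**  For all `c₁, c₂ > 0`,
`L_bce(h,k) ≥ (−⟨w_k,h⟩ + b_k)/(1+c₁) + (∑_{j≠k} (⟨w_j,h⟩ − b_j))/(1+c₂) + C`. -/
theorem Lbce_lower_bound {d K : ℕ} (hK : 2 ≤ K)
    (w : Fin K → EuclideanSpace ℝ (Fin d)) (b : Fin K → ℝ) (k : Fin K)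
    (x : EuclideanSpace ℝ (Fin d)) (c1 c2 : ℝ) (hc1 : 0 < c1) (hc2 : 0 < c2) :
    (1 / (1 + c1)) * (-⟪w k, x⟫ + b k) +
        (1 / (1 + c2)) * ∑ j ∈ Finset.univ.erase k, (⟪w j, x⟫ - b j) +
        Cconst K c1 c2 ≤
      Lbce w b k x :=
  Lbce_lower_bound_general w b k x c1 c2 hc1 hc2
end

section
/- Fix w_1, …, w_K ∈ ℝ^d, b ∈ ℝ^K, a label k ∈ {1,…,K}, and a feature h ∈ ℝ^d. Suppose ⟨w_j, h⟩ − b_j = ⟨w_ℓ, h⟩ − b_ℓ for all j, ℓ ≠ k, and set c_1 = exp(⟨w_k, h⟩ − b_k) and c_2 = exp(b_j − ⟨w_j, h⟩) for any (equivalently, every) j ≠ k. Then the lower bound holds with equality: L_bce(h, k) = (1/(1+c_1)) · (−⟨w_k, h⟩ + b_k) + (1/(1+c_2)) · Σ_{j≠k} (⟨w_j, h⟩ − b_j) + C, where C = (c_1/(1+c_1)) · log((1+c_1)/c_1) + log(1+c_1)/(1+c_1) + ((K−1)/(1+c_2)) · [c_2 · log((1+c_2)/c_2) + log(1+c_2)].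 -/
open scoped BigOperators RealInnerProductSpace

/-- **Equality case of the BCE lower bound.**  If all negative logits agree and
`c₁ = exp(⟨w_k,h⟩ − b_k)`, `c₂ = exp(b_j − ⟨w_j,h⟩)` for every `j ≠ k`, then the
lower bound for the per-sample BCE loss holds with equality. -/
theorem Lbce_lower_bound_eq {d K : ℕ} (hK : 2 ≤ K)
    (w : Fin K → EuclideanSpace ℝ (Fin d)) (b : Fin K → ℝ) (k : Fin K)
    (x : EuclideanSpace ℝ (Fin d))
    (heq : ∀ j l : Fin K, j ≠ k → l ≠ k →
      ⟪w j, x⟫ - b j = ⟪w l, x⟫ - b l)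
    (c1 c2 : ℝ)
    (hc1 : c1 = Real.exp (⟪w k, x⟫ - b k))
    (hc2 : ∀ j : Fin K, j ≠ k → c2 = Real.exp (b j - ⟪w j, x⟫)) :
    Lbce w b k x =
      (1 / (1 + c1)) * (-⟪w k, x⟫ + b k) +
        (1 / (1 + c2)) * ∑ j ∈ Finset.univ.erase k, (⟪w j, x⟫ - b j) +
        Cconst K c1 c2 := by
  have hKn : Nontrivial (Fin K) := Fin.nontrivial_iff_two_le.mpr hK
  obtain ⟨j0, hj0⟩ := exists_ne k
  set t : ℝ := ⟪w k, x⟫ - b k with ht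
  set s : ℝ := ⟪w j0, x⟫ - b j0 with hs
  have hc2' : c2 = Real.exp (-s) := by
    rw [hc2 j0 hj0]; congr 1; rw [hs]; ring
  have hc1pos : 0 < c1 := hc1 ▸ Real.exp_pos _
  have hc2pos : 0 < c2 := hc2' ▸ Real.exp_pos _
  have h1 : (0:ℝ) < 1 + c1 := by linarith
  have h2 : (0:ℝ) < 1 + c2 := by linarith
  have hcard : (Finset.univ.erase k).card = K - 1 := by
    simp [Finset.card_erase_of_mem]
  have hcastK : ((K - 1 : ℕ) : ℝ) = (K : ℝ) - 1 := by
    have : 1 ≤ K := by omega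
    push_cast [Nat.cast_sub this]; ring
  have hsum1 : ∑ j ∈ Finset.univ.erase k, Real.log (1 + Real.exp (⟪w j, x⟫ - b j))
      = ((K : ℝ) - 1) * Real.log (1 + Real.exp s) := by
    rw [Finset.sum_congr rfl (fun j hj => by
      rw [heq j j0 (Finset.ne_of_mem_erase hj) hj0]),
      Finset.sum_const, hcard, nsmul_eq_mul, hcastK]
  have hsum2 : ∑ j ∈ Finset.univ.erase k, (⟪w j, x⟫ - b j) = ((K : ℝ) - 1) * s := by
    rw [Finset.sum_congr rfl (fun j hj => heq j j0 (Finset.ne_of_mem_erase hj) hj0),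
      Finset.sum_const, hcard, nsmul_eq_mul, hcastK]
  have hA : Real.log (1 + Real.exp (-⟪w k, x⟫ + b k)) = Real.log (1 + c1) - t := by
    have : -⟪w k, x⟫ + b k = -t := by rw [ht]; ring
    rw [this]
    have hex : 1 + Real.exp (-t) = (1 + c1) / c1 := by
      rw [hc1, Real.exp_neg, eq_div_iff (Real.exp_ne_zero t)]
      field_simp
      ring
    rw [hex, Real.log_div (by positivity) (ne_of_gt hc1pos), hc1, Real.log_exp]
  have hB : Real.log (1 + Real.exp s) = Real.log (1 + c2) + s := by
    have hex : 1 + Real.exp s = (1 + c2) / c2 := by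
      rw [hc2', eq_div_iff (Real.exp_ne_zero (-s)), add_mul, one_mul,
        ← Real.exp_add]
      simp
      ring
    rw [hex, Real.log_div (by positivity) (ne_of_gt hc2pos), hc2', Real.log_exp]
    ring
  have hlogc1 : Real.log ((1 + c1) / c1) = Real.log (1 + c1) - t := by
    rw [Real.log_div (by positivity) (ne_of_gt hc1pos), hc1, Real.log_exp]
  have hlogc2 : Real.log ((1 + c2) / c2) = Real.log (1 + c2) + s := by
    rw [Real.log_div (by positivity) (ne_of_gt hc2pos), hc2', Real.log_exp]; ring
  have hnegt : -⟪w k, x⟫ + b k = -t := by rw [ht]; ring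
  rw [Lbce, Cconst, hA, hsum1, hsum2, hlogc1, hlogc2, hnegt]
  field_simp [hB]
  rw [hB]; ring
end

section
/- Let K ≥ 2 be an integer, n ≥ 1, λ_W, λ_H > 0, λ_b ≥ 0, ρ ≥ 0, and set a = √(λ_W/(n λ_H)). Then the equation in the real variable b, λ_b b = (K−1)/(K(1+exp(b + a ρ/(K(K−1))))) − 1/(K(1+exp(a ρ/K − b))), has exactly one real solution. -/
/-!
With `σ` the logistic sigmoid, `1 / (1 + exp x) = σ (-x) = 1 - σ x`, so the bias equation reads
`λ_b b + σ (b - aρ/K) / K + (K - 1) σ (b + aρ/(K(K-1))) / K = (K - 1) / K`.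
The left side is continuous and strictly increasing in `b`. Its sigmoid part tends to `0` at `-∞`
and to `1` at `+∞`, and `λ_b b` only pushes further in the same direction, so the left side
takes the value `(K - 1) / K ∈ (0, 1)` exactly once.
-/

open Filter Real Topology

theorem StrictMono.existsUnique_eq_of_continuous {f : ℝ → ℝ} (hmono : StrictMono f)
    (hcont : Continuous f) {t : ℝ} (hbelow : ∃ x, f x ≤ t) (habove : ∃ y, t ≤ f y) :
    ∃! z, f z = t := by
  obtain ⟨x, hx⟩ := hbelow
  obtain ⟨y, hy⟩ := habove
  obtain ⟨z, hz⟩ := intermediate_value_univ x y hcont ⟨hx, hy⟩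
  exact ⟨z, hz, fun w hw => hmono.injective (hw.trans hz.symm)⟩

theorem tendsto_const_mul_sigmoid_add_atBot (p q c d : ℝ) :
    Tendsto (fun b => p * sigmoid (b - d) + q * sigmoid (b + c)) atBot (𝓝 0) := by
  have hd := tendsto_sigmoid_atBot.comp (tendsto_atBot_add_const_right atBot (-d) tendsto_id)
  have hc := tendsto_sigmoid_atBot.comp (tendsto_atBot_add_const_right atBot c tendsto_id)
  simpa [sub_eq_add_neg] using (hd.const_mul p).add (hc.const_mul q)

theorem tendsto_const_mul_sigmoid_add_atTop (p q c d : ℝ) :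
    Tendsto (fun b => p * sigmoid (b - d) + q * sigmoid (b + c)) atTop (𝓝 (p + q)) := by
  have hd := tendsto_sigmoid_atTop.comp (tendsto_atTop_add_const_right atTop (-d) tendsto_id)
  have hc := tendsto_sigmoid_atTop.comp (tendsto_atTop_add_const_right atTop c tendsto_id)
  simpa [sub_eq_add_neg] using (hd.const_mul p).add (hc.const_mul q)

theorem existsUnique_mul_add_sigmoid_add_sigmoid_eq (c d : ℝ) {lam p q : ℝ}
    (hlam : 0 ≤ lam) (hp : 0 < p) (hq : 0 ≤ q) {t : ℝ} (ht : t ∈ Set.Ioo 0 (p + q)) :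
    ∃! b, lam * b + p * sigmoid (b - d) + q * sigmoid (b + c) = t := by
  set F := fun b => lam * b + p * sigmoid (b - d) + q * sigmoid (b + c)
  have hmono : StrictMono F :=
    ((monotone_id.const_mul hlam).add_strictMono
      ((sigmoid_strictMono.comp (strictMono_id.add_const (-d))).const_mul hp)).add_monotone
      ((sigmoid_monotone.comp (monotone_id.add_const c)).const_mul hq)
  have hbelow : ∃ x, F x ≤ t := by
    obtain ⟨x, hx, hsig⟩ := ((eventually_le_atBot 0).and
      ((tendsto_const_mul_sigmoid_add_atBot p q c d).eventually (ge_mem_nhds ht.1))).exists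
    exact ⟨x, by simp only [F]; linarith [mul_nonpos_of_nonneg_of_nonpos hlam hx]⟩
  have habove : ∃ y, t ≤ F y := by
    obtain ⟨y, hy, hsig⟩ := ((eventually_ge_atTop 0).and
      ((tendsto_const_mul_sigmoid_add_atTop p q c d).eventually (le_mem_nhds ht.2))).exists
    exact ⟨y, by simp only [F]; linarith [mul_nonneg hlam hy]⟩
  exact hmono.existsUnique_eq_of_continuous (by fun_prop) hbelow habove

theorem div_mul_one_add_exp (r k x : ℝ) : r / (k * (1 + exp x)) = r / k * sigmoid (-x) := by
  rw [sigmoid_def, neg_neg, div_mul_eq_div_div, div_eq_mul_inv]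

theorem bias_equation_unique_solution_general (K : ℕ) (hK : 2 ≤ K) (lamb ρ : ℝ) (hlamb : 0 ≤ lamb)
    (a : ℝ) :
    ∃! b : ℝ,
      lamb * b =
        ((K : ℝ) - 1) /
            ((K : ℝ) * (1 + Real.exp (b + a * ρ / ((K : ℝ) * ((K : ℝ) - 1))))) -
          1 / ((K : ℝ) * (1 + Real.exp (a * ρ / (K : ℝ) - b))) := by
  have hK1 : (1 : ℝ) < K := by exact_mod_cast hK
  set c := a * ρ / ((K : ℝ) * ((K : ℝ) - 1))
  set d := a * ρ / (K : ℝ)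
  have hreform : ∀ b, (lamb * b = ((K : ℝ) - 1) / ((K : ℝ) * (1 + exp (b + c))) -
        1 / ((K : ℝ) * (1 + exp (d - b)))) ↔
      lamb * b + 1 / K * sigmoid (b - d) + (K - 1) / K * sigmoid (b + c) = (K - 1) / K := by
    intro b
    rw [div_mul_one_add_exp, div_mul_one_add_exp, sigmoid_neg, neg_sub]
    constructor <;> intro h <;> linarith
  have ht : ((K : ℝ) - 1) / K ∈ Set.Ioo (0 : ℝ) (1 / K + (K - 1) / K) := by
    refine ⟨by apply div_pos <;> linarith, ?_⟩
    rw [← add_div, add_sub_cancel, div_lt_div_iff_of_pos_right] <;> linarith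
  exact (existsUnique_congr hreform).mpr
    (existsUnique_mul_add_sigmoid_add_sigmoid_eq c d hlamb (by positivity)
      (by apply div_nonneg <;> linarith) ht)

/-- **Uniqueness of the optimal classifier bias (Lemma 5).**  The bias equation
`λ_b b = (K−1)/(K(1+exp(b + aρ/(K(K−1))))) − 1/(K(1+exp(aρ/K − b)))`,
with `a = √(λ_W/(n λ_H))`, has exactly one real solution. -/
theorem bias_equation_unique_solution (K n : ℕ) (hK : 2 ≤ K) (hn : 1 ≤ n)
    (lamW lamH lamb ρ : ℝ) (hlamW : 0 < lamW) (hlamH : 0 < lamH)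
    (hlamb : 0 ≤ lamb) (hρ : 0 ≤ ρ)
    (a : ℝ) (ha : a = Real.sqrt (lamW / ((n : ℝ) * lamH))) :
    ∃! b : ℝ,
      lamb * b =
        ((K : ℝ) - 1) /
            ((K : ℝ) * (1 + Real.exp (b + a * ρ / ((K : ℝ) * ((K : ℝ) - 1))))) -
          1 / ((K : ℝ) * (1 + Real.exp (a * ρ / (K : ℝ) - b))) :=
  bias_equation_unique_solution_general K hK lamb ρ hlamb a
end

section
/- Let K > 2 be an integer, n ≥ 1, λ_W, λ_H > 0, λ_b ≥ 0, ρ ≥ 0, and set a = √(λ_W/(n λ_H)). Assume the condition λ_b · a ρ/(K−1) + 1/(2(K−1)) > 1/(1 + exp(a ρ/(K−1))). Then the unique solution b° of the bias equation λ_b b = (K−1)/(K(1+exp(b + a ρ/(K(K−1))))) − 1/(K(1+exp(a ρ/K − b))) satisfies −a ρ/(K(K−1)) < b° < a ρ/K; that is, b° strictly separates the common value a ρ/K of all positive decision scores ⟨w_k*, h_i^{(k)*}⟩ from the common value −a ρ/(K(K−1)) of all negative decision scores ⟨w_j*, h_i^{(k)*}⟩ (j ≠ k) at the corresponding critical point.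 -/
set_option maxHeartbeats 1000000

/-- **Separation of decision scores by the optimal bias (Lemma 6).**  If `K > 2` and
`λ_b·aρ/(K−1) + 1/(2(K−1)) > 1/(1+exp(aρ/(K−1)))` with `a = √(λ_W/(n λ_H))`, then any
solution `b°` of the bias equation satisfies `−aρ/(K(K−1)) < b° < aρ/K`, i.e. it strictly
separates the common positive decision score `aρ/K` from the common negative decision
score `−aρ/(K(K−1))`. -/
theorem bias_separates_decision_scores (K n : ℕ) (hK : 2 < K) (hn : 1 ≤ n)
    (lamW lamH lamb ρ : ℝ) (hlamW : 0 < lamW) (hlamH : 0 < lamH)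
    (hlamb : 0 ≤ lamb) (hρ : 0 ≤ ρ)
    (a : ℝ) (ha : a = Real.sqrt (lamW / ((n : ℝ) * lamH)))
    (hcond : 1 / (1 + Real.exp (a * ρ / ((K : ℝ) - 1))) <
      lamb * (a * ρ / ((K : ℝ) - 1)) + 1 / (2 * ((K : ℝ) - 1)))
    (b0 : ℝ)
    (hb0 : lamb * b0 =
      ((K : ℝ) - 1) /
          ((K : ℝ) * (1 + Real.exp (b0 + a * ρ / ((K : ℝ) * ((K : ℝ) - 1))))) -
        1 / ((K : ℝ) * (1 + Real.exp (a * ρ / (K : ℝ) - b0)))) :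
    -(a * ρ / ((K : ℝ) * ((K : ℝ) - 1))) < b0 ∧ b0 < a * ρ / (K : ℝ) := by
  have hK3 : (3 : ℝ) ≤ (K : ℝ) := by exact_mod_cast hK
  have hK0 : (0 : ℝ) < (K : ℝ) := by linarith
  have hKm : (0 : ℝ) < (K : ℝ) - 1 := by linarith
  have ha0 : 0 ≤ a := ha ▸ Real.sqrt_nonneg _
  set s := a * ρ / ((K : ℝ) - 1) with hs
  have hs0 : 0 ≤ s := by positivity
  have hc : a * ρ / ((K : ℝ) * ((K : ℝ) - 1)) = s / (K : ℝ) := by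
    rw [hs, div_div]
    ring
  have hd : a * ρ / (K : ℝ) = s * ((K : ℝ) - 1) / (K : ℝ) := by
    rw [hs, div_mul_cancel₀ _ (ne_of_gt hKm)]
  rw [hc] at hb0 ⊢
  rw [hd] at hb0 ⊢
  set X := Real.exp (b0 + s / (K : ℝ)) with hXdef
  set Y := Real.exp (s * ((K : ℝ) - 1) / (K : ℝ) - b0) with hYdef
  set Z := Real.exp s with hZdef
  have hX : 0 < X := Real.exp_pos _
  have hY : 0 < Y := Real.exp_pos _
  have hZ1 : 1 ≤ Z := Real.one_le_exp hs0
  have hXY : X * Y = Z := by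
    rw [hXdef, hYdef, hZdef, ← Real.exp_add]
    congr 1
    field_simp
    ring
  have h1X : (0 : ℝ) < 1 + X := by linarith
  have h1Y : (0 : ℝ) < 1 + Y := by linarith
  have h1Z : (0 : ℝ) < 1 + Z := by linarith
  have hL0 : 0 ≤ lamb * s := mul_nonneg hlamb hs0
  -- cleared-denominator form of the condition
  have key : 2 * ((K : ℝ) - 1) < (2 * ((K : ℝ) - 1) * (lamb * s) + 1) * (1 + Z) := by
    have h2 : (0 : ℝ) < 2 * ((K : ℝ) - 1) := by linarith
    have h := (div_lt_iff₀ h1Z).mp hcond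
    have he : 1 / (2 * ((K : ℝ) - 1)) * (2 * ((K : ℝ) - 1)) = 1 := by
      field_simp
    nlinarith [mul_lt_mul_of_pos_left h h2]
  -- cleared-denominator form of the bias equation
  have hb0' : lamb * b0 * ((K : ℝ) * (1 + X) * (1 + Y)) =
      ((K : ℝ) - 1) * (1 + Y) - (1 + X) := by
    rw [hb0]
    have hK0' : (K : ℝ) ≠ 0 := ne_of_gt hK0
    have h1X' : (1 : ℝ) + X ≠ 0 := ne_of_gt h1X
    have h1Y' : (1 : ℝ) + Y ≠ 0 := ne_of_gt h1Y
    field_simp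
  constructor
  · -- lower bound
    by_contra h
    push_neg at h
    have hXle : X ≤ 1 := by
      rw [hXdef, ← Real.exp_zero]
      apply Real.exp_le_exp.mpr
      have hbK : b0 * (K : ℝ) ≤ -(s / (K : ℝ)) * (K : ℝ) :=
        mul_le_mul_of_nonneg_right h hK0.le
      have : -(s / (K : ℝ)) * (K : ℝ) = -s := by field_simp
      -- b0 + s/K ≤ 0
      have hb' : b0 ≤ -(s / (K : ℝ)) := h
      linarith
    have hYge : Z ≤ Y := by nlinarith [hXY]
    have hlam : lamb * b0 * (K : ℝ) ≤ -(lamb * s) := by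
      have h1 : lamb * b0 ≤ lamb * (-(s / (K : ℝ))) :=
        mul_le_mul_of_nonneg_left h hlamb
      have h2 : lamb * (-(s / (K : ℝ))) * (K : ℝ) = -(lamb * s) := by
        field_simp
      nlinarith [mul_le_mul_of_nonneg_right h1 hK0.le]
    have hE2 := mul_le_mul_of_nonneg_right hlam (mul_pos h1X h1Y).le
    -- (K-1)(1+Y) ≥ 4
    have h4 : 4 ≤ ((K : ℝ) - 1) * (1 + Y) := by nlinarith
    nlinarith [hb0', hE2, mul_nonneg hL0 (mul_pos h1X h1Y).le]
  · -- upper bound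
    by_contra h
    push_neg at h
    have hYle : Y ≤ 1 := by
      rw [hYdef]
      exact Real.exp_le_one_iff.mpr (by linarith)
    have hXge : Z ≤ X := by nlinarith [hXY]
    have hlam : lamb * s * ((K : ℝ) - 1) ≤ lamb * b0 * (K : ℝ) := by
      have h1 : lamb * (s * ((K : ℝ) - 1) / (K : ℝ)) ≤ lamb * b0 :=
        mul_le_mul_of_nonneg_left h hlamb
      have h2 : lamb * (s * ((K : ℝ) - 1) / (K : ℝ)) * (K : ℝ) =
          lamb * s * ((K : ℝ) - 1) := by field_simp
      nlinarith [mul_le_mul_of_nonneg_right h1 hK0.le]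
    have hE1 := mul_le_mul_of_nonneg_right hlam (mul_pos h1X h1Y).le
    have h3 : 0 ≤ lamb * s * ((K : ℝ) - 1) * (1 + Y) * (X - Z) :=
      mul_nonneg (mul_nonneg (mul_nonneg hL0 hKm.le) h1Y.le) (by linarith)
    have h4 : (1 + Z) * (Y - 1) ≤ 0 :=
      mul_nonpos_of_nonneg_of_nonpos h1Z.le (by linarith)
    have h2 := mul_lt_mul_of_pos_right key h1Y
    nlinarith [hb0', hE1, h3, h4, h2]
end

section
/- Let K ≥ 2 be an integer, α > 0, w_1, …, w_K ∈ ℝ^d, b = (b_1,…,b_K) ∈ ℝ^K, and ρ = Σ_{k=1}^K ‖w_k‖². Assume: (i) Σ_{k=1}^K w_k = 0; (ii) there is a constant s ∈ ℝ with α‖w_k‖² − b_k = s for every k; and (iii) there is a constant t ∈ ℝ with α⟨w_j, w_k⟩ − b_j = t for every ordered pair j ≠ k. Then b_1 = b_2 = ⋯ = b_K, ‖w_k‖² = ρ/K for every k, and ⟨w_j, w_k⟩ = −ρ/(K(K−1)) for every j ≠ k; equivalently, W Wᵀ = (ρ/(K−1))(I_K − (1/K)1_K 1_Kᵀ), so the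 w_k form a K-simplex equiangular tight frame. -/
open scoped BigOperators RealInnerProductSpace

/-- **Emergence of the simplex ETF.**  Let `α > 0`, `ρ = Σ_k ‖w_k‖²`, and suppose
(i) `Σ_k w_k = 0`; (ii) `α‖w_k‖² − b_k = s` for all `k`; (iii) `α⟨w_j, w_k⟩ − b_j = t`
for all `j ≠ k`.  Then all biases agree, `‖w_k‖² = ρ/K` for every `k`, and
`⟨w_j, w_k⟩ = −ρ/(K(K−1))` for every `j ≠ k`; i.e. the `w_k` form a `K`-simplex
equiangular tight frame. -/
theorem equal_conditions_give_etf {d K : ℕ} (hK : 2 ≤ K)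
    (α : ℝ) (hα : 0 < α)
    (w : Fin K → EuclideanSpace ℝ (Fin d)) (b : Fin K → ℝ)
    (ρ : ℝ) (hρ : ρ = ∑ k, ‖w k‖ ^ 2)
    (hsum : ∑ k, w k = 0)
    (s : ℝ) (hs : ∀ k : Fin K, α * ‖w k‖ ^ 2 - b k = s)
    (t : ℝ) (ht : ∀ j k : Fin K, j ≠ k → α * ⟪w j, w k⟫ - b j = t) :
    (∀ k j : Fin K, b k = b j) ∧
    (∀ k : Fin K, ‖w k‖ ^ 2 = ρ / (K : ℝ)) ∧
    (∀ j k : Fin K, j ≠ k →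
      ⟪w j, w k⟫ = -(ρ / ((K : ℝ) * ((K : ℝ) - 1)))) := by
  have hK2 : (2 : ℝ) ≤ (K : ℝ) := by exact_mod_cast hK
  have hK0 : (K : ℝ) ≠ 0 := by linarith
  have hK1 : (K : ℝ) - 1 ≠ 0 := by linarith
  -- key identity: for each j, -α‖w_j‖² - (K-1) b_j = (K-1) t
  have key : ∀ j : Fin K,
      -(α * ‖w j‖ ^ 2) - ((K : ℝ) - 1) * b j = ((K : ℝ) - 1) * t := by
    intro j
    have hin : ∑ k ∈ Finset.univ.erase j, ⟪w j, w k⟫ = -(‖w j‖ ^ 2) := by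
      have h1 : ∑ k, ⟪w j, w k⟫ = ⟪w j, ∑ k, w k⟫ := (inner_sum _ _ _).symm
      rw [hsum, inner_zero_right] at h1
      have h2 : ∑ k, ⟪w j, w k⟫
          = ⟪w j, w j⟫ + ∑ k ∈ Finset.univ.erase j, ⟪w j, w k⟫ := by
        rw [← Finset.add_sum_erase _ _ (Finset.mem_univ j)]
      have h3 : ⟪w j, w j⟫ = ‖w j‖ ^ 2 := real_inner_self_eq_norm_sq (w j)
      rw [h1, h3] at h2
      linarith
    have hsum2 : ∑ k ∈ Finset.univ.erase j, (α * ⟪w j, w k⟫ - b j)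
        = ((K : ℝ) - 1) * t := by
      rw [Finset.sum_congr rfl (fun k hk => ht j k (Ne.symm (Finset.ne_of_mem_erase hk)))]
      rw [Finset.sum_const, Finset.card_erase_of_mem (Finset.mem_univ j),
        Finset.card_univ, Fintype.card_fin]
      have : ((K - 1 : ℕ) : ℝ) = (K : ℝ) - 1 := by
        have : 1 ≤ K := le_trans (by norm_num) hK
        push_cast [Nat.cast_sub this]; ring
      simp [nsmul_eq_mul, this]
    rw [Finset.sum_sub_distrib, ← Finset.mul_sum, hin, Finset.sum_const,
      Finset.card_erase_of_mem (Finset.mem_univ j), Finset.card_univ,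
      Fintype.card_fin] at hsum2
    have hc : ((K - 1 : ℕ) : ℝ) = (K : ℝ) - 1 := by
      have : 1 ≤ K := le_trans (by norm_num) hK
      push_cast [Nat.cast_sub this]; ring
    rw [nsmul_eq_mul, hc] at hsum2
    linarith
  -- biases constant
  have hb : ∀ j : Fin K, b j = -(s + ((K : ℝ) - 1) * t) / K := by
    intro j
    have h1 := hs j
    have h2 := key j
    field_simp
    linarith
  have hbconst : ∀ k j : Fin K, b k = b j := fun k j => by rw [hb k, hb j]
  -- norms constant
  have hnorm : ∀ k : Fin K, ‖w k‖ ^ 2 = ρ / K := by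
    have hw : ∀ k : Fin K, ‖w k‖ ^ 2 = (s + -(s + ((K : ℝ) - 1) * t) / K) / α := by
      intro k
      have h1 := hs k
      rw [hb k] at h1
      field_simp at h1 ⊢
      linarith
    intro k
    have hsumρ : ρ = K * ((s + -(s + ((K : ℝ) - 1) * t) / K) / α) := by
      rw [hρ, Finset.sum_congr rfl (fun k _ => hw k), Finset.sum_const,
        Finset.card_univ, Fintype.card_fin, nsmul_eq_mul]
    rw [hw k, hsumρ]
    field_simp
  refine ⟨hbconst, hnorm, fun j k hjk => ?_⟩
  have h1 := ht j k hjk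
  have h2 := key j
  have h3 := hnorm j
  have h4 : α * ⟪w j, w k⟫ = -(α * ‖w j‖ ^ 2) / ((K : ℝ) - 1) := by
    have : α * ⟪w j, w k⟫ = t + b j := by linarith
    rw [this]
    field_simp
    linarith
  rw [h3] at h4
  have hα' := hα.ne'
  field_simp at h4 ⊢
  nlinarith [h4]
end

section
/- Let K ≥ 2 be an integer, λ_b ≥ 0, λ_W, λ_H > 0, n ≥ 1, ρ ≥ 0, and a = √(λ_W/(n λ_H)). Define β_1(b) = λ_b K b + 1/(1 + exp(a ρ/K − b)) and β_2(b) = (K−1)/(1 + exp(b + a ρ/(K(K−1)))). Then the unique solution b° of the bias equation λ_b b = (K−1)/(K(1+exp(b + a ρ/(K(K−1))))) − 1/(K(1+exp(a ρ/K − b))) satisfies −a ρ/(K(K−1)) < b° < a ρ/K if and only if β_1(−a ρ/(K(K−1))) < β_2(−a ρ/(K(K−1))) and β_1(a ρ/K) > β_2(a ρ/K); moreover, β_1(−a ρ/(K(K−1))) < β_2(−a ρ/(K(K−1))) holds whenever K > 2, and β_1(a ρ/K) > β_2(a ρ/K) holds if and only if λ_b · a ρ/(K−1) + 1/(2(K−1))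 > 1/(1 + exp(a ρ/(K−1))). -/
/-- The increasing side `β₁(b) = λ_b K b + 1/(1+exp(a₁ − b))` of the bias equation. -/
noncomputable def beta1 (K : ℕ) (lamb a1 b : ℝ) : ℝ :=
  lamb * (K : ℝ) * b + 1 / (1 + Real.exp (a1 - b))

/-- The decreasing side `β₂(b) = (K−1)/(1+exp(b + a₂))` of the bias equation. -/
noncomputable def beta2 (K : ℕ) (a2 b : ℝ) : ℝ :=
  ((K : ℝ) - 1) / (1 + Real.exp (b + a2))

/-- **Characterization of bias separation.**  With `a = √(λ_W/(nλ_H))`,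
`β₁(b) = λ_b K b + 1/(1+exp(aρ/K − b))` and `β₂(b) = (K−1)/(1+exp(b + aρ/(K(K−1))))`,
the unique solution `b°` of the bias equation lies strictly between `−aρ/(K(K−1))` and
`aρ/K` iff `β₁ < β₂` at the left endpoint and `β₁ > β₂` at the right endpoint; moreover
the left-endpoint inequality holds whenever `K > 2`, and the right-endpoint inequality
holds iff `λ_b·aρ/(K−1) + 1/(2(K−1)) > 1/(1+exp(aρ/(K−1)))`. -/
theorem bias_separation_characterization (K n : ℕ) (hK : 2 ≤ K) (hn : 1 ≤ n)
    (lamW lamH lamb ρ : ℝ) (hlamW : 0 < lamW) (hlamH : 0 < lamH)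
    (hlamb : 0 ≤ lamb) (hρ : 0 ≤ ρ)
    (a : ℝ) (ha : a = Real.sqrt (lamW / ((n : ℝ) * lamH))) :
    (∀ b0 : ℝ,
      lamb * b0 =
          ((K : ℝ) - 1) /
              ((K : ℝ) * (1 + Real.exp (b0 + a * ρ / ((K : ℝ) * ((K : ℝ) - 1))))) -
            1 / ((K : ℝ) * (1 + Real.exp (a * ρ / (K : ℝ) - b0))) →
        ((-(a * ρ / ((K : ℝ) * ((K : ℝ) - 1))) < b0 ∧ b0 < a * ρ / (K : ℝ)) ↔
          (beta1 K lamb (a * ρ / (K : ℝ)) (-(a * ρ / ((K : ℝ) * ((K : ℝ) - 1)))) <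
              beta2 K (a * ρ / ((K : ℝ) * ((K : ℝ) - 1)))
                (-(a * ρ / ((K : ℝ) * ((K : ℝ) - 1)))) ∧
            beta2 K (a * ρ / ((K : ℝ) * ((K : ℝ) - 1))) (a * ρ / (K : ℝ)) <
              beta1 K lamb (a * ρ / (K : ℝ)) (a * ρ / (K : ℝ))))) ∧
    (2 < K →
      beta1 K lamb (a * ρ / (K : ℝ)) (-(a * ρ / ((K : ℝ) * ((K : ℝ) - 1)))) <
        beta2 K (a * ρ / ((K : ℝ) * ((K : ℝ) - 1)))
          (-(a * ρ / ((K : ℝ) * ((K : ℝ) - 1))))) ∧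
    (beta2 K (a * ρ / ((K : ℝ) * ((K : ℝ) - 1))) (a * ρ / (K : ℝ)) <
        beta1 K lamb (a * ρ / (K : ℝ)) (a * ρ / (K : ℝ)) ↔
      1 / (1 + Real.exp (a * ρ / ((K : ℝ) - 1))) <
        lamb * (a * ρ / ((K : ℝ) - 1)) + 1 / (2 * ((K : ℝ) - 1))) := by
  have hK2 : (2:ℝ) ≤ (K:ℝ) := by exact_mod_cast hK
  have hK0 : (0:ℝ) < (K:ℝ) := by linarith
  have hK0' : (K:ℝ) ≠ 0 := ne_of_gt hK0
  have hKm1 : (0:ℝ) < (K:ℝ) - 1 := by linarith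
  have hKm1' : (K:ℝ) - 1 ≠ 0 := ne_of_gt hKm1
  have ha0 : 0 ≤ a := ha ▸ Real.sqrt_nonneg _
  set c1 : ℝ := a * ρ / (K:ℝ) with hc1def
  set c2 : ℝ := a * ρ / ((K:ℝ) * ((K:ℝ) - 1)) with hc2def
  have hc1 : 0 ≤ c1 := div_nonneg (mul_nonneg ha0 hρ) (le_of_lt hK0)
  have hc2 : 0 ≤ c2 := div_nonneg (mul_nonneg ha0 hρ) (by positivity)
  have hsum : c1 + c2 = a * ρ / ((K:ℝ) - 1) := by
    rw [hc1def, hc2def]; field_simp; ring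
  -- strict monotonicity of g = β₁ − β₂
  have hg : StrictMono (fun b => beta1 K lamb c1 b - beta2 K c2 b) := by
    intro x y hxy
    have hA : 1 / (1 + Real.exp (c1 - x)) < 1 / (1 + Real.exp (c1 - y)) := by
      apply one_div_lt_one_div_of_lt
      · positivity
      · have := Real.exp_lt_exp.mpr (show c1 - y < c1 - x by linarith)
        linarith
    have hB : ((K:ℝ) - 1) / (1 + Real.exp (y + c2)) <
        ((K:ℝ) - 1) / (1 + Real.exp (x + c2)) := by
      apply div_lt_div_of_pos_left hKm1 (by positivity)
      have := Real.exp_lt_exp.mpr (show x + c2 < y + c2 by linarith)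
      linarith
    have hL : lamb * (K:ℝ) * x ≤ lamb * (K:ℝ) * y := by
      apply mul_le_mul_of_nonneg_left (le_of_lt hxy) (by positivity)
    simp only [beta1, beta2]
    linarith
  refine ⟨?_, ?_, ?_⟩
  · intro b0 heq
    have hgb0 : beta1 K lamb c1 b0 - beta2 K c2 b0 = 0 := by
      have hE1 : (0:ℝ) < 1 + Real.exp (c1 - b0) := by positivity
      have hE2 : (0:ℝ) < 1 + Real.exp (b0 + c2) := by positivity
      simp only [beta1, beta2]
      rw [hc1def, hc2def] at *
      field_simp at heq ⊢
      nlinarith [heq, Real.exp_pos (a * ρ / (K:ℝ) - b0),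
        Real.exp_pos (b0 + a * ρ / ((K:ℝ) * ((K:ℝ) - 1)))]
    constructor
    · rintro ⟨h1, h2⟩
      constructor
      · have := hg h1; simp only at this; linarith
      · have := hg h2; simp only at this; linarith
    · rintro ⟨h1, h2⟩
      constructor
      · by_contra h
        push_neg at h
        have := hg.le_iff_le.mpr h
        linarith
      · by_contra h
        push_neg at h
        have := hg.le_iff_le.mpr h
        linarith
  · intro hK3
    have hK3' : (3:ℝ) ≤ (K:ℝ) := by exact_mod_cast hK3
    simp only [beta1, beta2]
    have h0 : -c2 + c2 = 0 := by ring
    rw [h0, Real.exp_zero]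
    have hexp : (0:ℝ) < Real.exp (c1 - -c2) := Real.exp_pos _
    have h1 : 1 / (1 + Real.exp (c1 - -c2)) < 1 := by
      rw [div_lt_one (by positivity)]; linarith
    have h2 : lamb * (K:ℝ) * (-c2) ≤ 0 := by
      have : 0 ≤ lamb * (K:ℝ) * c2 := by positivity
      linarith
    have h3 : (2:ℝ) ≤ (K:ℝ) - 1 := by linarith
    have : (1:ℝ) ≤ ((K:ℝ) - 1) / (1 + 1) := by
      rw [le_div_iff₀ (by norm_num)]; linarith
    linarith
  · simp only [beta1, beta2]
    have h0 : c1 - c1 = 0 := by ring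
    rw [h0, Real.exp_zero, hsum]
    have hE : (0:ℝ) < 1 + Real.exp (a * ρ / ((K:ℝ) - 1)) := by positivity
    have e1 : lamb * (K:ℝ) * c1 = lamb * (a * ρ) := by
      rw [hc1def]; field_simp
    have e2 : lamb * (a * ρ / ((K:ℝ) - 1)) + 1 / (2 * ((K:ℝ) - 1)) =
        (lamb * (a * ρ) + 1 / (1 + 1)) / ((K:ℝ) - 1) := by
      field_simp; ring
    rw [e1, e2, lt_div_iff₀ hKm1]
    constructor
    · intro h
      have : ((K:ℝ) - 1) / (1 + Real.exp (a * ρ / ((K:ℝ) - 1))) =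
          1 / (1 + Real.exp (a * ρ / ((K:ℝ) - 1))) * ((K:ℝ) - 1) := by ring
      linarith [this ▸ h]
    · intro h
      have e3 : ((K:ℝ) - 1) / (1 + Real.exp (a * ρ / ((K:ℝ) - 1))) =
          1 / (1 + Real.exp (a * ρ / ((K:ℝ) - 1))) * ((K:ℝ) - 1) := by ring
      rw [e3]; linarith
end
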